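/- arXiv:2507.07051 — 2 statements merged into one kernel-verified Lean document; each statement's English description precedes it below -/
import Mathlib

section
/- Let m ≥ 1 and n ≥ 1 be natural numbers and set h = 2^{n−1}·m and N = 2^{n−1}. Define g : ℝ → ℝ by g(x) = (∏_{i=1}^{h} (1 − x^{2^i−1})) / (∏_{i=1}^{m} (1 − x^{2^i−1}))^{N}. Then g(x) tends, as x tends to 1 within ℝ \ {1}, to the real number ∏_{j=0}^{N−1} ∏_{i=1}^{m} (2^{jm+i} − 1)/(2^i − 1). -/
open Filter Finset Topology

/-!
Since `1 - x ^ a = (1 - x) * (1 + x + ⋯ + x ^ (a - 1))`, each quotient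
`(1 - x ^ a) / (1 - x ^ b)` agrees off `x = 1` with a ratio of geometric sums, which is continuous
at `1` with value `a / b`. Splitting the `2 ^ (n - 1) * m` numerator factors into `2 ^ (n - 1)`
blocks of `m`, the function is a finite product of such quotients.
-/

theorem Finset.prod_range_mul_eq_prod_prod {M : Type*} [CommMonoid M] (f : ℕ → M) (N m : ℕ) :
    ∏ k ∈ range (N * m), f k = ∏ j ∈ range N, ∏ i ∈ range m, f (j * m + i) := by
  induction N with
  | zero => simp
  | succ N ih => rw [Nat.succ_mul, prod_range_add, ih, prod_range_succ]

theorem tendsto_one_sub_pow_div_one_sub_pow {𝕜 : Type*} [NormedField 𝕜] [CharZero 𝕜]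
    (a : ℕ) {b : ℕ} (hb : b ≠ 0) :
    Tendsto (fun x : 𝕜 => (1 - x ^ a) / (1 - x ^ b)) (𝓝[≠] 1) (𝓝 ((a : 𝕜) / b)) := by
  have hgeom : ContinuousAt (fun x : 𝕜 => (∑ i ∈ range a, x ^ i) / ∑ i ∈ range b, x ^ i) 1 :=
    ContinuousAt.div (by fun_prop) (by fun_prop) (by simpa using hb)
  have hlim := hgeom.tendsto
  simp only [one_pow, sum_const, card_range, nsmul_one] at hlim
  refine (hlim.mono_left nhdsWithin_le_nhds).congr' ?_
  filter_upwards [self_mem_nhdsWithin] with x hx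
  rw [← mul_neg_geom_sum, ← mul_neg_geom_sum,
    mul_div_mul_left _ _ (sub_ne_zero.2 (Ne.symm hx))]

theorem tendsto_poincare_ratio_general (n m : ℕ) :
    Tendsto
      (fun x : ℝ =>
        (∏ i ∈ Finset.range (2 ^ (n - 1) * m), (1 - x ^ (2 ^ (i + 1) - 1))) /
          (∏ i ∈ Finset.range m, (1 - x ^ (2 ^ (i + 1) - 1))) ^ (2 ^ (n - 1)))
      (nhdsWithin (1 : ℝ) {(1 : ℝ)}ᶜ)
      (nhds (∏ j ∈ Finset.range (2 ^ (n - 1)), ∏ i ∈ Finset.range m,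
        (((2 : ℝ) ^ (j * m + i + 1) - 1) / ((2 : ℝ) ^ (i + 1) - 1)))) := by
  have hblocks : ∀ x : ℝ,
      (∏ i ∈ range (2 ^ (n - 1) * m), (1 - x ^ (2 ^ (i + 1) - 1))) /
          (∏ i ∈ range m, (1 - x ^ (2 ^ (i + 1) - 1))) ^ (2 ^ (n - 1)) =
        ∏ j ∈ range (2 ^ (n - 1)), ∏ i ∈ range m,
          (1 - x ^ (2 ^ (j * m + i + 1) - 1)) / (1 - x ^ (2 ^ (i + 1) - 1)) := fun x => by
    rw [prod_range_mul_eq_prod_prod, ← card_range (2 ^ (n - 1)), ← prod_const, card_range]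
    simp only [prod_div_distrib]
  have hcast : ∀ k : ℕ, ((2 ^ k - 1 : ℕ) : ℝ) = 2 ^ k - 1 := fun k => by
    rw [Nat.cast_sub Nat.one_le_two_pow]
    norm_num
  simp only [hblocks, ← hcast]
  refine tendsto_finsetProd _ fun j _ => tendsto_finsetProd _ fun i _ => ?_
  have hexp : 2 ^ (i + 1) - 1 ≠ 0 := by
    have := Nat.one_lt_two_pow i.succ_ne_zero
    omega
  exact tendsto_one_sub_pow_div_one_sub_pow _ hexp

/-- The l'Hôpital-style limit in the proof of Corollary 3.8: for `m, n ≥ 1`,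
`h = 2^{n-1}·m`, `N = 2^{n-1}`, the function
`g(x) = (∏_{i=1}^h (1 - x^{2^i-1})) / (∏_{i=1}^m (1 - x^{2^i-1}))^N`
tends, as `x → 1` with `x ≠ 1`, to `∏_{j=0}^{N-1} ∏_{i=1}^m (2^{jm+i}-1)/(2^i-1)`. -/
theorem tendsto_poincare_ratio (n m : ℕ) (hn : 1 ≤ n) (hm : 1 ≤ m) :
    Tendsto
      (fun x : ℝ =>
        (∏ i ∈ Finset.range (2 ^ (n - 1) * m), (1 - x ^ (2 ^ (i + 1) - 1))) /
          (∏ i ∈ Finset.range m, (1 - x ^ (2 ^ (i + 1) - 1))) ^ (2 ^ (n - 1)))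
      (nhdsWithin (1 : ℝ) {(1 : ℝ)}ᶜ)
      (nhds (∏ j ∈ Finset.range (2 ^ (n - 1)), ∏ i ∈ Finset.range m,
        (((2 : ℝ) ^ (j * m + i + 1) - 1) / ((2 : ℝ) ^ (i + 1) - 1)))) :=
  tendsto_poincare_ratio_general n m
end

section
/- Let A be a commutative ring, let h ≥ 0, and let a_1, …, a_h ∈ A be such that (2, a_1, …, a_h) is a regular sequence on A and the quotient ring A/(2, a_1, …, a_h) is finite. Then for all positive integers i_0, i_1, …, i_h, the quotient ring A/(2^{i_0}, a_1^{i_1}, …, a_h^{i_h}) is finite of cardinality |A/(2, a_1, …, a_h)|^{i_0 · i_1 ⋯ i_h}. -/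
/-!
Multiplication by an `M`-regular element `x` gives short exact sequences
`0 → M/xⁿM → M/xⁿ⁺¹M → M/xM → 0`. Reducing a short exact sequence modulo a sequence that is
weakly regular on its right-hand term keeps it short exact, so regularity of the remaining
elements passes from `M/xM` to `M/xⁿM`, and cardinalities multiply:
`|M/(xⁿ, rs)| = |M/(x, rs)|ⁿ`. Induction along the sequence multiplies the exponents.
These cardinality identities hold for `Nat.card` without any finiteness assumption (both sides
are `0` for infinite quotients); finiteness of the result is read off from its nonzero cardinality.
-/

open Function Submodule RingTheory.Sequence
open scoped Pointwise

theorem Function.Exact.card_eq_mul {R M₁ M₂ M₃ : Type*} [Ring R] [AddCommGroup M₁]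
    [AddCommGroup M₂] [AddCommGroup M₃] [Module R M₁] [Module R M₂] [Module R M₃]
    {f : M₁ →ₗ[R] M₂} {g : M₂ →ₗ[R] M₃} (hfg : Exact f g) (hf : Injective f)
    (hg : Surjective g) : Nat.card M₂ = Nat.card M₁ * Nat.card M₃ := by
  rw [(LinearMap.range f).card_eq_card_quotient_mul_card,
    Nat.card_congr (LinearEquiv.ofInjective f hf).toEquiv.symm,
    Nat.card_congr (hfg.linearEquivOfSurjective hg).toEquiv]

section

variable {R M M₁ M₂ M₃ : Type*} [CommRing R] [AddCommGroup M] [Module R M]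
  [AddCommGroup M₁] [AddCommGroup M₂] [AddCommGroup M₃]
  [Module R M₁] [Module R M₂] [Module R M₃] {f : M₁ →ₗ[R] M₂} {g : M₂ →ₗ[R] M₃}

theorem QuotSMulTop.subsingleton_one : Subsingleton (QuotSMulTop (1 : R) M) :=
  Submodule.Quotient.subsingleton_iff.mpr (one_smul R ⊤)

theorem QuotSMulTop.map_injective {r : R} (hfg : Exact f g) (hf : Injective f)
    (hr : IsSMulRegular M₃ r) : Injective (QuotSMulTop.map r f) := by
  have := QuotSMulTop.map_first_exact_on_four_term_exact_of_isSMulRegular_last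
    ((LinearMap.exact_zero_iff_injective M₁ f).mpr hf) hfg hr
  rwa [map_zero, LinearMap.exact_zero_iff_injective] at this

theorem IsSMulRegular.exists_exact_quotSMulTop_pow {x : R} (hx : IsSMulRegular M x) (n : ℕ) :
    ∃ (f : QuotSMulTop (x ^ n) M →ₗ[R] QuotSMulTop (x ^ (n + 1)) M)
      (g : QuotSMulTop (x ^ (n + 1)) M →ₗ[R] QuotSMulTop x M),
      Exact f g ∧ Injective f ∧ Surjective g := by
  have hmul : x ^ n • ⊤ ≤ (x ^ (n + 1) • ⊤ : Submodule R M).comap (LinearMap.lsmul R M x) := by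
    intro m hm
    obtain ⟨b, -, rfl⟩ := (mem_smul_pointwise_iff_exists _ _ _).mp hm
    rw [mem_comap, LinearMap.lsmul_apply, smul_smul, ← pow_succ']
    exact smul_mem_pointwise_smul _ _ _ trivial
  have hle : x ^ (n + 1) • ⊤ ≤ (x • ⊤ : Submodule R M) := by
    intro m hm
    obtain ⟨b, -, rfl⟩ := (mem_smul_pointwise_iff_exists _ _ _).mp hm
    rw [pow_succ', mul_smul]
    exact smul_mem_pointwise_smul _ _ _ trivial
  refine ⟨mapQ _ _ _ hmul, factor hle, ?_, ?_, factor_surjective hle⟩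
  · intro y
    obtain ⟨m, rfl⟩ := mkQ_surjective _ y
    rw [factor_mk, mkQ_apply, mkQ_apply, Quotient.mk_eq_zero]
    constructor
    · intro hm
      obtain ⟨b, -, rfl⟩ := (mem_smul_pointwise_iff_exists _ _ _).mp hm
      exact ⟨Submodule.Quotient.mk b, rfl⟩
    · rintro ⟨z, hz⟩
      obtain ⟨b, rfl⟩ := Submodule.Quotient.mk_surjective _ z
      rw [mapQ_apply, Submodule.Quotient.eq, LinearMap.lsmul_apply] at hz
      rw [← sub_sub_cancel (x • b) m]
      exact sub_mem (smul_mem_pointwise_smul b x ⊤ trivial) (hle hz)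
  · refine (injective_iff_map_eq_zero _).mpr fun y hy => ?_
    obtain ⟨m, rfl⟩ := Submodule.Quotient.mk_surjective _ y
    obtain ⟨b, -, hb⟩ := (Quotient.mk_eq_zero _).mp hy
    refine (Quotient.mk_eq_zero _).mpr ⟨b, trivial, hx ?_⟩
    simpa [pow_succ', mul_smul] using hb

namespace RingTheory.Sequence

theorem IsWeaklyRegular.of_subsingleton [Subsingleton M] (rs : List R) :
    IsWeaklyRegular M rs :=
  ⟨fun _ _ a b _ => Subsingleton.elim a b⟩

theorem IsWeaklyRegular.of_exact {rs : List R} (hfg : Exact f g) (hf : Injective f)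
    (hg : Surjective g) (h₁ : IsWeaklyRegular M₁ rs) (h₃ : IsWeaklyRegular M₃ rs) :
    IsWeaklyRegular M₂ rs := by
  induction rs generalizing M₁ M₂ M₃ with
  | nil => exact .nil R M₂
  | cons r rs ih =>
    rw [isWeaklyRegular_cons_iff] at h₁ h₃ ⊢
    exact ⟨isSMulRegular_of_range_eq_ker hf hfg.linearMap_ker_eq.symm h₁.1 h₃.1,
      ih (QuotSMulTop.map_exact r hfg hg) (QuotSMulTop.map_injective hfg hf h₃.1)
        (QuotSMulTop.map_surjective r hg) h₁.2 h₃.2⟩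

theorem card_quotient_ofList_smul_top_eq_mul {rs : List R} (hfg : Exact f g)
    (hf : Injective f) (hg : Surjective g) (h₃ : IsWeaklyRegular M₃ rs) :
    Nat.card (M₂ ⧸ (Ideal.ofList rs • ⊤ : Submodule R M₂)) =
      Nat.card (M₁ ⧸ (Ideal.ofList rs • ⊤ : Submodule R M₁)) *
        Nat.card (M₃ ⧸ (Ideal.ofList rs • ⊤ : Submodule R M₃)) := by
  have hinj := map_first_exact_on_four_term_right_exact_of_isSMulRegular_last
    ((LinearMap.exact_zero_iff_injective M₁ f).mpr hf) hfg hg h₃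
  rw [mapQ_zero, LinearMap.exact_zero_iff_injective] at hinj
  have hsurj : Surjective (mapQ _ _ g (smul_top_le_comap_smul_top (Ideal.ofList rs) g)) := by
    rw [← LinearMap.range_eq_top, range_mapQ, LinearMap.range_eq_top.mpr hg, Submodule.map_top,
      range_mkQ]
  refine Exact.card_eq_mul ?_ hinj hsurj
  exact map_first_exact_on_four_term_right_exact_of_isSMulRegular_last hfg
    ((LinearMap.exact_zero_iff_surjective PUnit g).mpr hg) (surjective_to_subsingleton _)
    (.of_subsingleton rs)

variable {x : R} {rs : List R}

theorem IsWeaklyRegular.quotSMulTop_pow (hx : IsSMulRegular M x)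
    (h : IsWeaklyRegular (QuotSMulTop x M) rs) (n : ℕ) :
    IsWeaklyRegular (QuotSMulTop (x ^ n) M) rs := by
  induction n with
  | zero =>
    have := QuotSMulTop.subsingleton_one (R := R) (M := M)
    rw [pow_zero]
    exact .of_subsingleton rs
  | succ n ih =>
    obtain ⟨f, g, hfg, hf, hg⟩ := hx.exists_exact_quotSMulTop_pow n
    exact ih.of_exact hfg hf hg h

theorem card_quotient_quotSMulTop_pow (hx : IsSMulRegular M x)
    (h : IsWeaklyRegular (QuotSMulTop x M) rs) (n : ℕ) :
    Nat.card (QuotSMulTop (x ^ n) M ⧸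
        (Ideal.ofList rs • ⊤ : Submodule R (QuotSMulTop (x ^ n) M))) =
      Nat.card (QuotSMulTop x M ⧸ (Ideal.ofList rs • ⊤ : Submodule R (QuotSMulTop x M))) ^ n := by
  induction n with
  | zero =>
    have := QuotSMulTop.subsingleton_one (R := R) (M := M)
    rw [pow_zero, pow_zero]
    exact Nat.card_of_subsingleton 0
  | succ n ih =>
    obtain ⟨f, g, hfg, hf, hg⟩ := hx.exists_exact_quotSMulTop_pow n
    rw [card_quotient_ofList_smul_top_eq_mul hfg hf hg h, ih, pow_succ]

theorem card_quotient_ofList_ofFn_pow {n : ℕ} (a : Fin n → R) (e : Fin n → ℕ)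
    (h : IsWeaklyRegular M (List.ofFn a)) :
    Nat.card (M ⧸ (Ideal.ofList (List.ofFn fun k => a k ^ e k) • ⊤ : Submodule R M)) =
      Nat.card (M ⧸ (Ideal.ofList (List.ofFn a) • ⊤ : Submodule R M)) ^ ∏ k, e k := by
  induction n generalizing M with
  | zero => simp
  | succ n ih =>
    rw [List.ofFn_succ, isWeaklyRegular_cons_iff] at h
    rw [List.ofFn_succ, List.ofFn_succ,
      Nat.card_congr (quotOfListConsSMulTopEquivQuotSMulTopInner M _ _).toEquiv,
      Nat.card_congr (quotOfListConsSMulTopEquivQuotSMulTopInner M _ _).toEquiv,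
      ih _ _ (h.2.quotSMulTop_pow h.1 (e 0)), card_quotient_quotSMulTop_pow h.1 h.2,
      Fin.prod_univ_succ, pow_mul]

end RingTheory.Sequence

end

theorem Ideal.ofList_ofFn_smul_top {R : Type*} [CommRing R] {n : ℕ} (a : Fin n → R) :
    (Ideal.ofList (List.ofFn a) • ⊤ : Submodule R R) = Ideal.span (Set.range a) := by
  rw [smul_eq_mul, Ideal.mul_top, Ideal.ofList]
  congr 1
  ext
  exact List.mem_ofFn' _ _

theorem card_quotient_pow_regular_sequence_general
    (A : Type*) [CommRing A] (h : ℕ) (a : Fin h → A)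
    (hreg : RingTheory.Sequence.IsWeaklyRegular A ((2 : A) :: List.ofFn a))
    (hfin : Finite (A ⧸ Ideal.span (insert (2 : A) (Set.range a))))
    (i₀ : ℕ) (i : Fin h → ℕ) :
    Finite (A ⧸ Ideal.span (insert ((2 : A) ^ i₀) (Set.range fun k => a k ^ i k))) ∧
    Nat.card (A ⧸ Ideal.span (insert ((2 : A) ^ i₀) (Set.range fun k => a k ^ i k))) =
      Nat.card (A ⧸ Ideal.span (insert (2 : A) (Set.range a))) ^ (i₀ * ∏ k, i k) := by
  have hpow :
      (fun k => (Fin.cons 2 a : Fin (h + 1) → A) k ^ (Fin.cons i₀ i : Fin (h + 1) → ℕ) k) =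
        Fin.cons ((2 : A) ^ i₀) fun k => a k ^ i k := by
    funext k
    cases k using Fin.cases <;> rfl
  have hcard := card_quotient_ofList_ofFn_pow (Fin.cons (2 : A) a) (Fin.cons i₀ i)
    (by simpa only [List.ofFn_succ, Fin.cons_zero, Fin.cons_succ] using hreg)
  rw [Ideal.ofList_ofFn_smul_top, Ideal.ofList_ofFn_smul_top, hpow, Fin.range_cons,
    Fin.range_cons, Fin.prod_cons] at hcard
  refine ⟨Nat.finite_of_card_ne_zero ?_, hcard⟩
  rw [hcard]
  exact pow_ne_zero _ Nat.card_pos.ne'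

/-- The algebraic core of Proposition 6.11: if `(2, a_1, …, a_h)` is a regular sequence
on a commutative ring `A` with `A/(2, a_1, …, a_h)` finite, then for all positive
integers `i_0, …, i_h`, the quotient `A/(2^{i_0}, a_1^{i_1}, …, a_h^{i_h})` is finite
of cardinality `|A/(2, a_1, …, a_h)|^{i_0 · i_1 ⋯ i_h}`. -/
theorem card_quotient_pow_regular_sequence
    (A : Type*) [CommRing A] (h : ℕ) (a : Fin h → A)
    (hreg : RingTheory.Sequence.IsWeaklyRegular A ((2 : A) :: List.ofFn a))
    (hfin : Finite (A ⧸ Ideal.span (insert (2 : A) (Set.range a))))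
    (i₀ : ℕ) (i : Fin h → ℕ) (hi₀ : 0 < i₀) (hi : ∀ k, 0 < i k) :
    Finite (A ⧸ Ideal.span (insert ((2 : A) ^ i₀) (Set.range fun k => a k ^ i k))) ∧
    Nat.card (A ⧸ Ideal.span (insert ((2 : A) ^ i₀) (Set.range fun k => a k ^ i k))) =
      Nat.card (A ⧸ Ideal.span (insert (2 : A) (Set.range a))) ^ (i₀ * ∏ k, i k) :=
  card_quotient_pow_regular_sequence_general A h a hreg hfin i₀ i
end
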